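/- Let π be any policy such that for every stage t ≥ 1 and every s ∈ S, a ∈ A(s) with d_t(s,a) > 0, the conservation property x*_s = Σ_{s'∈S} P(s,a,s') · x*_{s'} holds. Then for every t ≥ 1, Σ_{s∈S} Σ_{a∈A(s)} μ_t^π(s,a) · x*_s = x*_{s0}; that is, the expected optimal reachability value is invariant over time under any policy that uses only actions conserving the optimal reachability probabilities. -/

import Mathlib

/-!
Write `μ_{t+1}(s,a) = d_{t+1}(s,a) ν_{t+1}(s)` with `ν` the state distribution. As `d_{t+1}(s,·)`
sums to one, the expected value at stage `t + 1` is `Σ_s ν_{t+1}(s) x*_s`. Expanding `ν_{t+1}`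
through `P` turns this into `Σ_{s,a} μ_t(s,a) Σ_{s'} P(s,a,s') x*_{s'}`, and conservation on every
action of positive occupancy collapses the inner sum back to `x*_s`.
-/

open scoped ENNReal

section

variable {S A : Type} [Fintype S] [Fintype A] [DecidableEq S] [DecidableEq A]

/-- A policy: a sequence of decision rules, each supported on the available actions. -/
def IsPolicy (avail : S → Finset A) (π : ℕ → S → A → ℝ) : Prop :=
  ∀ t s, (∀ a, 0 ≤ π t s a) ∧ (∀ a, a ∉ avail s → π t s a = 0) ∧
    (∑ a ∈ avail s, π t s a) = 1

/-- A stationary policy uses the same decision rule at every stage. -/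
def IsStationaryPolicy (π : ℕ → S → A → ℝ) : Prop := ∀ t, π t = π 0

/-- Occupancy measures: `occ P avail init π t s a` is `μ^π_{t+1}(s,a)` (stages indexed from 1). -/
def occ (P : S → A → S → ℝ) (avail : S → Finset A) (init : S)
    (π : ℕ → S → A → ℝ) : ℕ → S → A → ℝ
  | 0 => fun s a => if s = init then π 0 s a else 0
  | t + 1 => fun s' a' =>
      π (t + 1) s' a' * ∑ s : S, ∑ a ∈ avail s, P s a s' * occ P avail init π t s a

/-- Expected residence time `ξ^π(s,a) ∈ [0,∞]`. -/
noncomputable def resTime (P : S → A → S → ℝ) (avail : S → Finset A) (init : S)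
    (π : ℕ → S → A → ℝ) (s : S) (a : A) : ℝ≥0∞ :=
  ∑' t : ℕ, ENNReal.ofReal (occ P avail init π t s a)

/-- Probability of reaching the absorbing set `B`. -/
noncomputable def reachProb (P : S → A → S → ℝ) (avail : S → Finset A) (B : Finset S)
    (init : S) (π : ℕ → S → A → ℝ) : ℝ≥0∞ :=
  ⨆ t : ℕ, ∑ s ∈ B, ∑ a ∈ avail s, ENNReal.ofReal (occ P avail init π t s a)

/-- `x*_s`: optimal probability of reaching `B` starting from `s`. -/
noncomputable def xstar (P : S → A → S → ℝ) (avail : S → Finset A) (B : Finset S)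
    (s : S) : ℝ≥0∞ :=
  ⨆ π : {π : ℕ → S → A → ℝ // IsPolicy avail π}, reachProb P avail B s π.1

/-- A state is absorbing if every available action loops on it with probability 1. -/
def Absorbing (P : S → A → S → ℝ) (avail : S → Finset A) (s : S) : Prop :=
  ∀ a ∈ avail s, P s a s = 1

/-- Expected total cost `f_c(π) ∈ [0,∞]`. -/
noncomputable def totalCost (P : S → A → S → ℝ) (avail : S → Finset A) (init : S)
    (c : S → A → ℝ) (π : ℕ → S → A → ℝ) : ℝ≥0∞ :=
  ∑ s : S, ∑ a ∈ avail s, resTime P avail init π s a * ENNReal.ofReal (c s a)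


/-- The state distribution `ν_{t+1}`, indexed like `occ`. -/
def stateOcc (P : S → A → S → ℝ) (avail : S → Finset A) (init : S)
    (π : ℕ → S → A → ℝ) : ℕ → S → ℝ
  | 0 => fun s => if s = init then 1 else 0
  | t + 1 => fun s' => ∑ s : S, ∑ a ∈ avail s, P s a s' * occ P avail init π t s a

section ConservedValue

omit [Fintype A] [DecidableEq A]

variable {P : S → A → S → ℝ} {avail : S → Finset A} {init : S} {π : ℕ → S → A → ℝ}

theorem occ_eq_mul_stateOcc (t : ℕ) (s : S) (a : A) :
    occ P avail init π t s a = π t s a * stateOcc P avail init π t s := by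
  cases t with
  | zero => by_cases hs : s = init <;> simp [occ, stateOcc, hs]
  | succ t => rfl

theorem stateOcc_nonneg (hP0 : ∀ s a s', 0 ≤ P s a s') (hπ : IsPolicy avail π) :
    ∀ t s, 0 ≤ stateOcc P avail init π t s
  | 0, s => by
      show 0 ≤ if s = init then (1 : ℝ) else 0
      split_ifs <;> norm_num
  | t + 1, s' => Finset.sum_nonneg fun s _ => Finset.sum_nonneg fun a _ => by
      rw [occ_eq_mul_stateOcc]
      exact mul_nonneg (hP0 s a s') (mul_nonneg ((hπ t s).1 a) (stateOcc_nonneg hP0 hπ t s))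

theorem occ_nonneg (hP0 : ∀ s a s', 0 ≤ P s a s') (hπ : IsPolicy avail π)
    (t : ℕ) (s : S) (a : A) : 0 ≤ occ P avail init π t s a := by
  rw [occ_eq_mul_stateOcc]
  exact mul_nonneg ((hπ t s).1 a) (stateOcc_nonneg hP0 hπ t s)

theorem pos_of_occ_pos (hπ : IsPolicy avail π) {t : ℕ} {s : S} {a : A}
    (h : 0 < occ P avail init π t s a) : 0 < π t s a := by
  refine ((hπ t s).1 a).lt_of_ne fun h0 => h.ne' ?_
  rw [occ_eq_mul_stateOcc, ← h0, zero_mul]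

theorem sum_ofReal_occ_mul (hπ : IsPolicy avail π) (t : ℕ) (s : S) (c : ℝ≥0∞) :
    ∑ a ∈ avail s, ENNReal.ofReal (occ P avail init π t s a) * c =
      ENNReal.ofReal (stateOcc P avail init π t s) * c := by
  simp_rw [occ_eq_mul_stateOcc, ENNReal.ofReal_mul ((hπ t s).1 _)]
  rw [← Finset.sum_mul, ← Finset.sum_mul, ← ENNReal.ofReal_sum_of_nonneg fun a _ => (hπ t s).1 a,
    (hπ t s).2.2, ENNReal.ofReal_one, one_mul]

theorem ofReal_stateOcc_succ (hP0 : ∀ s a s', 0 ≤ P s a s') (hπ : IsPolicy avail π)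
    (t : ℕ) (s' : S) :
    ENNReal.ofReal (stateOcc P avail init π (t + 1) s') =
      ∑ s, ∑ a ∈ avail s, ENNReal.ofReal (occ P avail init π t s a) * ENNReal.ofReal (P s a s') := by
  have hterm : ∀ s a, 0 ≤ P s a s' * occ P avail init π t s a := fun s a =>
    mul_nonneg (hP0 s a s') (occ_nonneg hP0 hπ t s a)
  rw [stateOcc, ENNReal.ofReal_sum_of_nonneg fun s _ => Finset.sum_nonneg fun a _ => hterm s a]
  refine Finset.sum_congr rfl fun s _ => ?_
  rw [ENNReal.ofReal_sum_of_nonneg fun a _ => hterm s a]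
  refine Finset.sum_congr rfl fun a _ => ?_
  rw [ENNReal.ofReal_mul (hP0 s a s'), mul_comm]

theorem ofReal_occ_mul_eq_of_conserving (hπ : IsPolicy avail π) (v : S → ℝ≥0∞)
    {t : ℕ} {s : S} {a : A} (hv : 0 < π t s a → v s = ∑ s', ENNReal.ofReal (P s a s') * v s') :
    ENNReal.ofReal (occ P avail init π t s a) * v s =
      ENNReal.ofReal (occ P avail init π t s a) * ∑ s', ENNReal.ofReal (P s a s') * v s' := by
  rcases le_or_gt (occ P avail init π t s a) 0 with h | h
  · simp [ENNReal.ofReal_of_nonpos h]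
  · rw [← hv (pos_of_occ_pos hπ h)]

theorem sum_stateOcc_mul_eq_of_conserving (hP0 : ∀ s a s', 0 ≤ P s a s') (hπ : IsPolicy avail π)
    (v : S → ℝ≥0∞)
    (hv : ∀ t s, ∀ a ∈ avail s, 0 < π t s a → v s = ∑ s', ENNReal.ofReal (P s a s') * v s') :
    ∀ t, ∑ s, ENNReal.ofReal (stateOcc P avail init π t s) * v s = v init
  | 0 => by simp [stateOcc, apply_ite ENNReal.ofReal, ite_mul]
  | t + 1 => calc
      ∑ s', ENNReal.ofReal (stateOcc P avail init π (t + 1) s') * v s'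
        = ∑ s', ∑ s, ∑ a ∈ avail s,
            ENNReal.ofReal (occ P avail init π t s a) * (ENNReal.ofReal (P s a s') * v s') := by
          simp_rw [ofReal_stateOcc_succ hP0 hπ, Finset.sum_mul, mul_assoc]
      _ = ∑ s, ∑ a ∈ avail s,
            ENNReal.ofReal (occ P avail init π t s a) * ∑ s', ENNReal.ofReal (P s a s') * v s' := by
          rw [Finset.sum_comm]
          refine Finset.sum_congr rfl fun s _ => ?_
          rw [Finset.sum_comm]
          simp_rw [Finset.mul_sum]
      _ = ∑ s, ∑ a ∈ avail s, ENNReal.ofReal (occ P avail init π t s a) * v s :=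
          Finset.sum_congr rfl fun s _ => Finset.sum_congr rfl fun a ha =>
            (ofReal_occ_mul_eq_of_conserving hπ v (hv t s a ha)).symm
      _ = v init := by
          simp_rw [sum_ofReal_occ_mul hπ]
          exact sum_stateOcc_mul_eq_of_conserving hP0 hπ v hv t

end ConservedValue

theorem conserving_policy_expected_value_invariant_general
    (P : S → A → S → ℝ) (avail : S → Finset A) (s0 : S) (B : Finset S)
    (hP0 : ∀ s a s', 0 ≤ P s a s')
    (π : ℕ → S → A → ℝ) (hπ : IsPolicy avail π)
    (hcons : ∀ t s, ∀ a ∈ avail s, 0 < π t s a →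
      xstar P avail B s = ∑ s' : S, ENNReal.ofReal (P s a s') * xstar P avail B s') :
    ∀ t : ℕ,
      (∑ s : S, ∑ a ∈ avail s,
        ENNReal.ofReal (occ P avail s0 π t s a) * xstar P avail B s) =
        xstar P avail B s0 := by
  intro t
  simp_rw [sum_ofReal_occ_mul hπ]
  exact sum_stateOcc_mul_eq_of_conserving hP0 hπ _ hcons t

/-- Under any policy that uses only actions conserving the optimal reachability probabilities
(`x*_s = Σ_{s'} P(s,a,s')·x*_{s'}` whenever `d_t(s,a) > 0`), the expected optimal reachability
value is invariant over time: `Σ_s Σ_{a∈A(s)} μ^π_t(s,a)·x*_s = x*_{s0}` for every stage `t ≥ 1`. -/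
theorem conserving_policy_expected_value_invariant
    (P : S → A → S → ℝ) (avail : S → Finset A) (s0 : S) (B : Finset S)
    (havail : ∀ s, (avail s).Nonempty)
    (hP0 : ∀ s a s', 0 ≤ P s a s')
    (hP1 : ∀ s, ∀ a ∈ avail s, (∑ s' : S, P s a s') = 1)
    (habs : ∀ s ∈ B, Absorbing P avail s)
    (π : ℕ → S → A → ℝ) (hπ : IsPolicy avail π)
    (hcons : ∀ t s, ∀ a ∈ avail s, 0 < π t s a →
      xstar P avail B s = ∑ s' : S, ENNReal.ofReal (P s a s') * xstar P avail B s') :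
    ∀ t : ℕ,
      (∑ s : S, ∑ a ∈ avail s,
        ENNReal.ofReal (occ P avail s0 π t s a) * xstar P avail B s) =
        xstar P avail B s0 :=
  conserving_policy_expected_value_invariant_general P avail s0 B hP0 π hπ hcons

end
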